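/- Let S be a set with a distinguished element 0 ∈ S. Then \bar{\bar{V}}_S is an immediate extension of V_S: for every g ∈ \bar{\bar{V}}_S with g ∉ V_S and every f ∈ V_S, there exists f' ∈ V_S with d(f', g) < d(f, g). -/

import Mathlib

open scoped NNRat

noncomputable section

/-- The positive rationals, as a subtype of `ℚ≥0`. -/
abbrev Qpos : Type := {q : ℚ≥0 // 0 < q}

/-- The support of `f : Qpos → S` relative to the distinguished element `s₀`. -/
def VSupp {S : Type*} (s₀ : S) (f : Qpos → S) : Set Qpos := {r | f r ≠ s₀}

/-- `V_S`: functions `ℚ^{>0} → S` with finite support. -/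
def VS (S : Type*) (s₀ : S) : Type _ := {f : Qpos → S // (VSupp s₀ f).Finite}

open Classical in
/-- The `ℚ≥0`-valued ultrametric: the greatest coordinate at which `f` and `g`
differ, and `0` if there is none (in particular `qdist f f = 0`). -/
def qdist {S : Type*} (f g : Qpos → S) : ℚ≥0 :=
  if h : ∃ m : ℚ≥0, IsGreatest {r : ℚ≥0 | ∃ hr : 0 < r, f ⟨r, hr⟩ ≠ g ⟨r, hr⟩} m
  then h.choose else 0


/-- `\bar{\bar{V}}_S`: functions `ℚ^{>0} → S` such that every nonempty subset of the
support has a greatest element. -/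
def VSbb (S : Type*) (s₀ : S) : Type _ :=
  {f : Qpos → S //
    ∀ t : Set Qpos, t ⊆ VSupp s₀ f → t.Nonempty → ∃ m ∈ t, ∀ x ∈ t, x ≤ m}

/-!
If `f ∈ V_S` and `g ∈ \bar{\bar{V}}_S` has infinite support, the set of coordinates where `f` and
`g` differ is nonempty and lies in `supp f ∪ supp g`, a finite set joined to a set whose nonempty
subsets have greatest elements. So it has a greatest element `m`, which is `d(f, g)`. Changing `f`
at `m` to `g m` keeps the support finite and leaves only differences below `m`.
-/

lemma exists_isGreatest_of_subset_union_of_finite {α : Type*} [LinearOrder α] {A B t : Set α}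
    (hA : ∀ s ⊆ A, s.Nonempty → ∃ m ∈ s, ∀ x ∈ s, x ≤ m) (hB : B.Finite)
    (ht : t ⊆ A ∪ B) (hne : t.Nonempty) : ∃ m, IsGreatest t m := by
  have ht_eq : t = (t ∩ A) ∪ (t ∩ B) := by
    rw [← Set.inter_union_distrib_left, Set.inter_eq_left.mpr ht]
  have greatest_A : (t ∩ A).Nonempty → ∃ a, IsGreatest (t ∩ A) a := fun h ↦ by
    obtain ⟨a, ha, ha_max⟩ := hA _ Set.inter_subset_right h
    exact ⟨a, ha, ha_max⟩
  have greatest_B : (t ∩ B).Nonempty → ∃ b, IsGreatest (t ∩ B) b := fun h ↦ by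
    obtain ⟨b, hb, hb_max⟩ := Set.exists_max_image _ id (hB.subset Set.inter_subset_right) h
    exact ⟨b, hb, hb_max⟩
  rw [ht_eq] at hne ⊢
  rcases (t ∩ A).eq_empty_or_nonempty with hA_empty | hA_ne
  · rw [hA_empty, Set.empty_union] at hne ⊢
    exact greatest_B hne
  rcases (t ∩ B).eq_empty_or_nonempty with hB_empty | hB_ne
  · rw [hB_empty, Set.union_empty]
    exact greatest_A hA_ne
  obtain ⟨a, ha⟩ := greatest_A hA_ne
  obtain ⟨b, hb⟩ := greatest_B hB_ne
  exact ⟨max a b, ha.union hb⟩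

section qdist

variable {S : Type*} {f g : Qpos → S}

lemma qdist_eq_of_isGreatest {m : Qpos} (h : IsGreatest {p | f p ≠ g p} m) :
    qdist f g = m := by
  have h' : IsGreatest {r : ℚ≥0 | ∃ hr : 0 < r, f ⟨r, hr⟩ ≠ g ⟨r, hr⟩} m :=
    ⟨⟨m.2, h.1⟩, fun r ⟨hr, hne⟩ ↦ @h.2 ⟨r, hr⟩ hne⟩
  unfold qdist
  rw [dif_pos ⟨m, h'⟩]
  exact (Exists.choose_spec ⟨(m : ℚ≥0), h'⟩).unique h'

lemma qdist_lt_of_forall_lt {m : Qpos} (h : ∀ p, f p ≠ g p → p < m) : qdist f g < m := by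
  unfold qdist
  split_ifs with hex
  · obtain ⟨hr, hne⟩ := hex.choose_spec.1
    exact h _ hne
  · exact m.2

lemma qdist_update_lt_of_isGreatest {m : Qpos} (hm : IsGreatest {p | f p ≠ g p} m) :
    qdist (Function.update f m (g m)) g < qdist f g := by
  rw [qdist_eq_of_isGreatest hm]
  refine qdist_lt_of_forall_lt fun p hp ↦ ?_
  have hpm : p ≠ m := by
    rintro rfl
    exact hp (Function.update_self ..)
  rw [Function.update_of_ne hpm] at hp
  exact lt_of_le_of_ne (hm.2 hp) hpm

end qdist

lemma VSupp_update_subset {S : Type*} (s₀ : S) (f : Qpos → S) (m : Qpos) (x : S) :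
    VSupp s₀ (Function.update f m x) ⊆ insert m (VSupp s₀ f) := by
  intro p hp
  by_cases hpm : p = m
  · exact Or.inl hpm
  · exact Or.inr (by simpa [VSupp, hpm] using hp)

/-- `\bar{\bar{V}}_S` is an immediate extension of `V_S`: for every
`g ∈ \bar{\bar{V}}_S \ V_S` (i.e. with infinite support) and every `f ∈ V_S` there is
`f' ∈ V_S` strictly closer to `g`. -/
theorem stmt16 {S : Type*} (s₀ : S)
    (g : VSbb S s₀) (hg : ¬ (VSupp s₀ g.1).Finite) (f : VS S s₀) :
    ∃ f' : VS S s₀, qdist f'.1 g.1 < qdist f.1 g.1 := by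
  have diff_subset : {p | f.1 p ≠ g.1 p} ⊆ VSupp s₀ g.1 ∪ VSupp s₀ f.1 :=
    fun p hp ↦ or_iff_not_imp_left.2 fun hpg hpf ↦ hp (hpf.trans (not_not.1 hpg).symm)
  have diff_nonempty : {p | f.1 p ≠ g.1 p}.Nonempty := by
    obtain ⟨p, hpg, hpf⟩ := (Set.Infinite.sdiff hg f.2).nonempty
    exact ⟨p, fun h ↦ hpg (h.symm.trans (not_not.mp hpf))⟩
  obtain ⟨m, hm⟩ :=
    exists_isGreatest_of_subset_union_of_finite g.2 f.2 diff_subset diff_nonempty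
  exact ⟨⟨Function.update f.1 m (g.1 m), (f.2.insert m).subset (VSupp_update_subset s₀ f.1 m _)⟩,
    qdist_update_lt_of_isGreatest hm⟩

end
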